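/- The two-sided Jacobi–Davidson left correction equation (I - p q^H)(A^H - θ̄ I)(I - p q^H) t = -r_p, subject to the constraint q^H t = 0, has exactly one solution t if and only if p^H (A - θ I)^{-1} q ≠ 0; and it has no solution if and only if p^H (A - θ I)^{-1} q = 0. -/

import Mathlib

/-!
With `B = (A - θ I)ᴴ` the equation reads `(I - p qᴴ) B (I - p qᴴ) t = -B p`, and
`qᴴ B p = conj (pᴴ (A - θ I) q) = 0`, so the projector `I - p qᴴ` fixes both `t` (by the
constraint) and `B p`. The equation therefore says that `B (t + p)` lies in the span of `p`,
i.e. `t = σ B⁻¹ p - p`, and the constraint `qᴴ t = 0` becomes `σ · qᴴ B⁻¹ p = 1`. This has a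
solution, necessarily unique, exactly when `qᴴ B⁻¹ p = conj (pᴴ (A - θ I)⁻¹ q)` is nonzero.
-/

open Matrix

theorem existsUnique_and_eq_iff {α : Sort*} {P : Prop} {a : α} : (∃! x, P ∧ x = a) ↔ P :=
  ⟨fun ⟨_, hx, _⟩ => hx.1, fun hP => ⟨a, ⟨hP, rfl⟩, fun _ hx => hx.2⟩⟩

section
variable {m R : Type*} [Fintype m]

theorem Matrix.one_sub_mul_mul_eq_sub_smul [DecidableEq m] [CommRing R]
    (p x : Matrix m (Fin 1) R) (u : Matrix (Fin 1) m R) :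
    (1 - p * u) * x = x - (u * x) 0 0 • p := by
  rw [Matrix.sub_mul, Matrix.one_mul, Matrix.mul_assoc]
  congr 1
  ext i j
  fin_cases j
  simp [Matrix.mul_apply, mul_comm (p _ _)]

theorem Matrix.conjTranspose_mul_conjTranspose_mul_apply [NonUnitalSemiring R] [StarRing R]
    (p q : Matrix m (Fin 1) R) (N : Matrix m m R) :
    (qᴴ * Nᴴ * p) 0 0 = star ((pᴴ * N * q) 0 0) := by
  rw [← conjTranspose_apply]
  simp only [conjTranspose_mul, conjTranspose_conjTranspose, Matrix.mul_assoc]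

variable [DecidableEq m] {K : Type*} [Field K] {B : Matrix m m K} {p : Matrix m (Fin 1) K}
  {u : Matrix (Fin 1) m K}

theorem correction_equation_iff (hB : IsUnit B.det) (hup : u * p = 1)
    (huBp : (u * B * p) 0 0 = 0) (t : Matrix m (Fin 1) K) :
    (u * t = 0 ∧ (1 - p * u) * B * (1 - p * u) * t = -(B * p)) ↔
      (u * B⁻¹ * p) 0 0 ≠ 0 ∧ t = ((u * B⁻¹ * p) 0 0)⁻¹ • (B⁻¹ * p) - p := by
  set d := (u * B⁻¹ * p) 0 0
  constructor
  · rintro ⟨ht, heq⟩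
    have hPt : (1 - p * u) * t = t := by rw [one_sub_mul_mul_eq_sub_smul, ht]; simp
    rw [Matrix.mul_assoc _ _ t, hPt, Matrix.mul_assoc, one_sub_mul_mul_eq_sub_smul] at heq
    set σ := (u * (B * t)) 0 0
    have hBt : B * (t + p) = σ • p := by
      rw [Matrix.mul_add]
      linear_combination (norm := module) heq
    have htp : t + p = σ • (B⁻¹ * p) := by
      rw [← Matrix.mul_smul, ← hBt, nonsing_inv_mul_cancel_left B _ hB]
    have hσ : σ * d = 1 := by
      have : (u * (t + p)) 0 0 = (u * (σ • (B⁻¹ * p))) 0 0 := by rw [htp]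
      simpa [Matrix.mul_add, ht, hup, ← Matrix.mul_assoc, d] using this.symm
    refine ⟨right_ne_zero_of_mul_eq_one hσ, ?_⟩
    rw [← eq_inv_of_mul_eq_one_left hσ]
    linear_combination (norm := module) htp
  · rintro ⟨hd, rfl⟩
    have ht : u * (d⁻¹ • (B⁻¹ * p) - p) = 0 := by
      ext i j
      fin_cases i; fin_cases j
      simp [Matrix.mul_sub, ← Matrix.mul_assoc, hup, d, hd]
    have hPp : (1 - p * u) * p = 0 := by
      rw [one_sub_mul_mul_eq_sub_smul, hup, one_apply_eq, one_smul, sub_self]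
    have hPBp : (1 - p * u) * (B * p) = B * p := by
      rw [one_sub_mul_mul_eq_sub_smul, ← Matrix.mul_assoc, huBp, zero_smul, sub_zero]
    refine ⟨ht, ?_⟩
    rw [Matrix.mul_assoc _ _ (_ - p), one_sub_mul_mul_eq_sub_smul, ht]
    simp [Matrix.mul_sub, mul_nonsing_inv_cancel_left B _ hB, Matrix.mul_assoc, hPp, hPBp]

end

/-- The two-sided Jacobi–Davidson left correction equation
`(I - p qᴴ)(Aᴴ - θ̄ I)(I - p qᴴ) t = -r_p`, subject to `qᴴ t = 0`,
has exactly one solution iff `pᴴ (A - θ I)⁻¹ q ≠ 0`, and has no solution iff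
`pᴴ (A - θ I)⁻¹ q = 0`. -/
theorem two_sided_jd_left_correction
    {n : ℕ} (A : Matrix (Fin n) (Fin n) ℂ)
    (p q : Matrix (Fin n) (Fin 1) ℂ)
    (hpq : pᴴ * q = 1)
    (θ : ℂ) (hθ : θ = (pᴴ * A * q) 0 0)
    (hA : IsUnit (A - θ • (1 : Matrix (Fin n) (Fin n) ℂ)))
    (rp : Matrix (Fin n) (Fin 1) ℂ)
    (hrp : rp = (Aᴴ - (starRingEnd ℂ θ) • 1) * p) :
    ((∃! t : Matrix (Fin n) (Fin 1) ℂ,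
        qᴴ * t = 0 ∧
          (1 - p * qᴴ) * (Aᴴ - (starRingEnd ℂ θ) • 1) * (1 - p * qᴴ) * t = -rp) ↔
      (pᴴ * (A - θ • (1 : Matrix (Fin n) (Fin n) ℂ))⁻¹ * q) 0 0 ≠ 0) ∧
    ((¬ ∃ t : Matrix (Fin n) (Fin 1) ℂ,
        qᴴ * t = 0 ∧
          (1 - p * qᴴ) * (Aᴴ - (starRingEnd ℂ θ) • 1) * (1 - p * qᴴ) * t = -rp) ↔
      (pᴴ * (A - θ • (1 : Matrix (Fin n) (Fin n) ℂ))⁻¹ * q) 0 0 = 0) := by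
  set B := (A - θ • (1 : Matrix (Fin n) (Fin n) ℂ))ᴴ
  have hB : Aᴴ - (starRingEnd ℂ θ) • 1 = B := by simp [B, conjTranspose_sub, conjTranspose_smul]
  have hBdet : IsUnit B.det := (isUnit_iff_isUnit_det B).mp ((isUnit_conjTranspose _).mpr hA)
  have hqp : qᴴ * p = 1 := by simpa using congrArg conjTranspose hpq
  have hqBp : (qᴴ * B * p) 0 0 = 0 := by
    rw [conjTranspose_mul_conjTranspose_mul_apply, star_eq_zero]
    simp [Matrix.mul_sub, Matrix.sub_mul, hpq, ← hθ]
  have hqBinvp : (qᴴ * B⁻¹ * p) 0 0 = star ((pᴴ * (A - θ • 1)⁻¹ * q) 0 0) := by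
    rw [← conjTranspose_nonsing_inv, conjTranspose_mul_conjTranspose_mul_apply]
  subst hrp
  simp only [hB, correction_equation_iff hBdet hqp hqBp, hqBinvp, star_ne_zero]
  simp [existsUnique_and_eq_iff]
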